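/- Let 0 < l₁ ≤ l₂ and let r : [l₁,l₂] → ℝ be twice differentiable and positive, K_r : [l₁,l₂] → ℝ differentiable, and K_l, μ, j : [l₁,l₂] → ℝ, satisfying the Hamiltonian constraint K_r(K_r + 2K_l) − (r'² + 2 r r'' − 1)/r² = 8π μ and the momentum constraint K_r' + (r'/r)(K_r − K_l) = 4π j on [l₁,l₂]. Assume the dominant energy condition μ ≥ |j| holds on [l₁,l₂], and that θ⁺ > 0 and θ⁻ > 0 on [l₁,l₂], i.e. r' + K_r r > 0 and r' − K_r r > 0. Then the Misner–Sharp energy is monotone: 𝓔(l₁) ≤ 𝓔(l₂). -/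

import Mathlib

open Set Filter Topology

/-!
Along the slice, `d𝓔/dl = 4π r² (μ r' + j K_r r)`: differentiating `𝓔` and eliminating `r''` with
the Hamiltonian constraint and `K_r'` with the momentum constraint leaves only matter terms.
Since `θ⁺, θ⁻ > 0` means `|K_r r| < r'`, the dominant energy condition makes this nonnegative.
-/

noncomputable def misnerSharpEnergy (r r' Kr : ℝ → ℝ) (l : ℝ) : ℝ :=
  r l / 2 * (1 - r' l ^ 2 + (Kr l * r l) ^ 2)

theorem HasDerivWithinAt.misnerSharpEnergy {r r' r'' Kr Kr' : ℝ → ℝ} {s : Set ℝ} {l : ℝ}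
    (hr : HasDerivWithinAt r (r' l) s l) (hr' : HasDerivWithinAt r' (r'' l) s l)
    (hKr : HasDerivWithinAt Kr (Kr' l) s l) :
    HasDerivWithinAt (misnerSharpEnergy r r' Kr)
      (r' l / 2 * (1 - r' l ^ 2 + (Kr l * r l) ^ 2) - r l * r' l * r'' l
        + Kr l * r l ^ 2 * (Kr' l * r l + Kr l * r' l)) s l := by
  have h := (hr.div_const 2).fun_mul
    (((hasDerivWithinAt_const l s 1).fun_sub (hr'.fun_pow 2)).fun_add ((hKr.fun_mul hr).fun_pow 2))
  refine h.congr_deriv ?_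
  push_cast
  ring

theorem misnerSharpEnergy_deriv_eq_of_constraints {r r' r'' Kr Kr' Kl μ j : ℝ} (hr : r ≠ 0)
    (hham : Kr * (Kr + 2 * Kl) - (r' ^ 2 + 2 * r * r'' - 1) / r ^ 2 = 8 * Real.pi * μ)
    (hmom : Kr' + r' / r * (Kr - Kl) = 4 * Real.pi * j) :
    r' / 2 * (1 - r' ^ 2 + (Kr * r) ^ 2) - r * r' * r'' + Kr * r ^ 2 * (Kr' * r + Kr * r')
      = 4 * Real.pi * r ^ 2 * (μ * r' + j * (Kr * r)) := by
  field_simp at hham hmom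
  linear_combination r' / 2 * hham + Kr * r ^ 2 * hmom

theorem mul_add_mul_nonneg_of_abs_le {μ j a b : ℝ} (hj : |j| ≤ μ)
    (hplus : 0 ≤ a + b) (hminus : 0 ≤ a - b) : 0 ≤ μ * a + j * b := by
  have hb : |b| ≤ a := abs_le.mpr ⟨by linarith, by linarith⟩
  have ha : 0 ≤ a := (abs_nonneg b).trans hb
  calc 0 ≤ |j| * (a - |b|) := mul_nonneg (abs_nonneg j) (by linarith)
    _ = |j| * a - |j * b| := by rw [abs_mul]; ring
    _ ≤ μ * a + j * b := by linarith [neg_abs_le (j * b), mul_le_mul_of_nonneg_right hj ha]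

theorem misner_sharp_energy_monotone_general
    (l₁ l₂ : ℝ) (hl₁₂ : l₁ ≤ l₂)
    (r r' r'' Kr Kr' Kl μ j : ℝ → ℝ)
    (hrpos : ∀ l ∈ Icc l₁ l₂, 0 < r l)
    (hr' : ∀ l ∈ Icc l₁ l₂, HasDerivWithinAt r (r' l) (Icc l₁ l₂) l)
    (hr'' : ∀ l ∈ Icc l₁ l₂, HasDerivWithinAt r' (r'' l) (Icc l₁ l₂) l)
    (hKr' : ∀ l ∈ Icc l₁ l₂, HasDerivWithinAt Kr (Kr' l) (Icc l₁ l₂) l)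
    (hham : ∀ l ∈ Icc l₁ l₂, Kr l * (Kr l + 2 * Kl l)
      - ((r' l) ^ 2 + 2 * r l * r'' l - 1) / (r l) ^ 2 = 8 * Real.pi * μ l)
    (hmom : ∀ l ∈ Icc l₁ l₂,
      Kr' l + (r' l / r l) * (Kr l - Kl l) = 4 * Real.pi * j l)
    (hDEC : ∀ l ∈ Icc l₁ l₂, |j l| ≤ μ l)
    (hθp : ∀ l ∈ Icc l₁ l₂, 0 < r' l + Kr l * r l)
    (hθm : ∀ l ∈ Icc l₁ l₂, 0 < r' l - Kr l * r l) :
    r l₁ / 2 * (1 - (r' l₁) ^ 2 + (Kr l₁ * r l₁) ^ 2) ≤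
      r l₂ / 2 * (1 - (r' l₂) ^ 2 + (Kr l₂ * r l₂) ^ 2) := by
  have hderiv : ∀ l ∈ Icc l₁ l₂, HasDerivWithinAt (misnerSharpEnergy r r' Kr)
      (4 * Real.pi * r l ^ 2 * (μ l * r' l + j l * (Kr l * r l))) (Icc l₁ l₂) l := fun l hl =>
    misnerSharpEnergy_deriv_eq_of_constraints (hrpos l hl).ne' (hham l hl) (hmom l hl) ▸
      (hr' l hl).misnerSharpEnergy (hr'' l hl) (hKr' l hl)
  have hmono : MonotoneOn (misnerSharpEnergy r r' Kr) (Icc l₁ l₂) :=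
    monotoneOn_of_hasDerivWithinAt_nonneg (convex_Icc l₁ l₂)
      (fun l hl => (hderiv l hl).continuousWithinAt)
      (fun l hl => (hderiv l (interior_subset hl)).mono interior_subset)
      (fun l hl => mul_nonneg (by positivity) (mul_add_mul_nonneg_of_abs_le
        (hDEC l (interior_subset hl)) (hθp l (interior_subset hl)).le
        (hθm l (interior_subset hl)).le))
  exact hmono (left_mem_Icc.mpr hl₁₂) (right_mem_Icc.mpr hl₁₂) hl₁₂

/-- monotonicity of the Misner–Sharp energy: On an untrapped
region `[l₁,l₂]` (`θ⁺ > 0` and `θ⁻ > 0`) on which the constraint equations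
and the dominant energy condition `μ ≥ |j|` hold, the Misner–Sharp energy
`𝓔 = (r/2)(1 − r'² + (K_r r)²)` is monotone: `𝓔(l₁) ≤ 𝓔(l₂)`. -/
theorem misner_sharp_energy_monotone
    (l₁ l₂ : ℝ) (hl₁ : 0 < l₁) (hl₁₂ : l₁ ≤ l₂)
    (r r' r'' Kr Kr' Kl μ j : ℝ → ℝ)
    (hrpos : ∀ l ∈ Icc l₁ l₂, 0 < r l)
    (hr' : ∀ l ∈ Icc l₁ l₂, HasDerivWithinAt r (r' l) (Icc l₁ l₂) l)
    (hr'' : ∀ l ∈ Icc l₁ l₂, HasDerivWithinAt r' (r'' l) (Icc l₁ l₂) l)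
    (hKr' : ∀ l ∈ Icc l₁ l₂, HasDerivWithinAt Kr (Kr' l) (Icc l₁ l₂) l)
    (hham : ∀ l ∈ Icc l₁ l₂, Kr l * (Kr l + 2 * Kl l)
      - ((r' l) ^ 2 + 2 * r l * r'' l - 1) / (r l) ^ 2 = 8 * Real.pi * μ l)
    (hmom : ∀ l ∈ Icc l₁ l₂,
      Kr' l + (r' l / r l) * (Kr l - Kl l) = 4 * Real.pi * j l)
    (hDEC : ∀ l ∈ Icc l₁ l₂, |j l| ≤ μ l)
    (hθp : ∀ l ∈ Icc l₁ l₂, 0 < r' l + Kr l * r l)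
    (hθm : ∀ l ∈ Icc l₁ l₂, 0 < r' l - Kr l * r l) :
    r l₁ / 2 * (1 - (r' l₁) ^ 2 + (Kr l₁ * r l₁) ^ 2) ≤
      r l₂ / 2 * (1 - (r' l₂) ^ 2 + (Kr l₂ * r l₂) ^ 2) :=
  misner_sharp_energy_monotone_general l₁ l₂ hl₁₂ r r' r'' Kr Kr' Kl μ j hrpos hr' hr'' hKr' hham
    hmom hDEC hθp hθm
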